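/- arXiv:2604.26487 — 6 statements merged into one kernel-verified Lean document; each statement's English description precedes it below -/
import Mathlib

section
/- Let M > 0 and define the sequence Q_0 = 0, Q_n = (M^2 + M·Q_{n-1} − Q_{n-1}^2)/(3M − 2Q_{n-1}) for n ≥ 1. Then for every n ≥ 0, Q_n ∈ [0, M); in particular the recursion is well defined (the denominator is strictly positive). -/
/-! The best-response map `q ↦ (M² + M q - q²) / (3M - 2q)` sends `[0, M)` into itself:
on that interval the denominator exceeds `q ≥ 0`, the numerator is `M² + q (M - q) ≥ 0`, and
`M (3M - 2q) - (M² + M q - q²) = (M - q) (2M - q) > 0`. Induction from `Q 0 = 0` finishes. -/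

open Set

namespace Stackelberg

theorem three_mul_sub_two_mul_pos {M q : ℝ} (hq : q ∈ Ico 0 M) : 0 < 3 * M - 2 * q := by
  linarith [hq.1, hq.2]

theorem mapsTo_Ico {M : ℝ} :
    MapsTo (fun q : ℝ ↦ (M ^ 2 + M * q - q ^ 2) / (3 * M - 2 * q)) (Ico 0 M) (Ico 0 M) := by
  intro q hq
  obtain ⟨hq0, hqM⟩ := hq
  have hden := three_mul_sub_two_mul_pos ⟨hq0, hqM⟩
  refine ⟨div_nonneg (by nlinarith) hden.le, (div_lt_iff₀ hden).2 ?_⟩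
  nlinarith [mul_pos (sub_pos.2 hqM) (by linarith : 0 < 2 * M - q)]

end Stackelberg

theorem stackelberg_aggregate_mem_Ico
    (M : ℝ) (hM : 0 < M) (Q : ℕ → ℝ)
    (hQ0 : Q 0 = 0)
    (hQ : ∀ n : ℕ, Q (n + 1) = (M ^ 2 + M * Q n - (Q n) ^ 2) / (3 * M - 2 * Q n)) :
    ∀ n : ℕ, Q n ∈ Set.Ico (0 : ℝ) M ∧ 0 < 3 * M - 2 * Q n := by
  have hmem : ∀ n, Q n ∈ Ico 0 M := by
    intro n
    induction n with
    | zero => rw [hQ0]; exact ⟨le_rfl, hM⟩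
    | succ k ih => rw [hQ k]; exact Stackelberg.mapsTo_Ico ih
  exact fun n ↦ ⟨hmem n, Stackelberg.three_mul_sub_two_mul_pos (hmem n)⟩
end

section
/- Let M > 0 and define Q_0 = 0, Q_n = (M^2 + M·Q_{n-1} − Q_{n-1}^2)/(3M − 2Q_{n-1}). Then the sequence (Q_n) is strictly increasing. -/
/-! Writing `f` for the recursion map, `f x - x = (M - x)² / (3M - 2x)`, which is positive on
`[0, M)`; and `f` maps `[0, M)` into itself because `M (3M - 2x) - (M² + Mx - x²) = (M - x)(2M - x)`.
Hence every `Q n` lies in `[0, M)` and `Q (n + 1) = f (Q n) > Q n`. -/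

open Set

noncomputable def stackelbergMap (M x : ℝ) : ℝ :=
  (M ^ 2 + M * x - x ^ 2) / (3 * M - 2 * x)

lemma stackelbergMap_sub_self {M x : ℝ} (h : 3 * M - 2 * x ≠ 0) :
    stackelbergMap M x - x = (M - x) ^ 2 / (3 * M - 2 * x) := by
  rw [stackelbergMap, eq_div_iff h, sub_mul, div_mul_cancel₀ _ h]
  ring

lemma lt_stackelbergMap {M x : ℝ} (hM : 0 < M) (hx : x < M) : x < stackelbergMap M x := by
  have hden : 0 < 3 * M - 2 * x := by linarith
  have hgap : 0 < (M - x) ^ 2 / (3 * M - 2 * x) := div_pos (by nlinarith) hden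
  linarith [stackelbergMap_sub_self hden.ne']

lemma mapsTo_stackelbergMap_Ico (M : ℝ) : MapsTo (stackelbergMap M) (Ico 0 M) (Ico 0 M) := by
  rintro x ⟨hx0, hxM⟩
  have hden : 0 < 3 * M - 2 * x := by linarith
  refine ⟨div_nonneg (by nlinarith) hden.le, (div_lt_iff₀ hden).2 ?_⟩
  nlinarith [mul_pos (sub_pos.2 hxM) (by linarith : 0 < 2 * M - x)]

theorem stackelberg_aggregate_strictMono
    (M : ℝ) (hM : 0 < M) (Q : ℕ → ℝ)
    (hQ0 : Q 0 = 0)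
    (hQ : ∀ n : ℕ, Q (n + 1) = (M ^ 2 + M * Q n - (Q n) ^ 2) / (3 * M - 2 * Q n)) :
    StrictMono Q := by
  have hQ' : ∀ n, Q (n + 1) = stackelbergMap M (Q n) := hQ
  have hmem : ∀ n, Q n ∈ Ico 0 M := by
    intro n
    induction n with
    | zero => exact ⟨hQ0.ge, hQ0 ▸ hM⟩
    | succ n ih => exact hQ' n ▸ mapsTo_stackelbergMap_Ico M ih
  refine strictMono_nat_of_lt_succ fun n => ?_
  rw [hQ' n]
  exact lt_stackelbergMap hM (hmem n).2
end

section
/- Define λ_0 = 0 and λ_m = (1 + λ_{m−1} − λ_{m−1}^2)/(3 − 2λ_{m−1}) for m ≥ 1. Then 0 ≤ λ_m < 1 for all m, the sequence (λ_m) is strictly increasing, and λ_m → 1 as m → ∞. -/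
/-!
Write `f x = (1 + x - x²) / (3 - 2x)`, so that `λ (m + 1) = f (λ m)`. The identities
`f x - x = (1 - x)² / (3 - 2x)` and `1 - f x = (1 - x)(2 - x) / (3 - 2x)` show that `f` maps
`[0, 1)` into itself and strictly increases every point of it. Hence `λ` increases and is
bounded by `1`, so it converges to some `a ≤ 1`; by continuity `a` is a fixed point of `f`,
and the first identity forces `a = 1`.
-/

open Filter Topology

noncomputable def lambdaStep (x : ℝ) : ℝ := (1 + x - x ^ 2) / (3 - 2 * x)

lemma lambdaStep_sub_self {x : ℝ} (hx : 3 - 2 * x ≠ 0) :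
    lambdaStep x - x = (1 - x) ^ 2 / (3 - 2 * x) := by
  rw [lambdaStep, eq_div_iff hx, sub_mul, div_mul_cancel₀ _ hx]
  ring

lemma one_sub_lambdaStep {x : ℝ} (hx : 3 - 2 * x ≠ 0) :
    1 - lambdaStep x = (1 - x) * (2 - x) / (3 - 2 * x) := by
  rw [lambdaStep, eq_div_iff hx, sub_mul, div_mul_cancel₀ _ hx]
  ring

lemma lt_lambdaStep {x : ℝ} (hx : x < 1) : x < lambdaStep x := by
  have hpos : 0 < 3 - 2 * x := by linarith
  have : 0 < lambdaStep x - x := by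
    rw [lambdaStep_sub_self hpos.ne']
    exact div_pos (pow_pos (by linarith) 2) hpos
  linarith

lemma lambdaStep_lt_one {x : ℝ} (hx : x < 1) : lambdaStep x < 1 := by
  have hpos : 0 < 3 - 2 * x := by linarith
  have : 0 < 1 - lambdaStep x := by
    rw [one_sub_lambdaStep hpos.ne']
    exact div_pos (mul_pos (by linarith) (by linarith)) hpos
  linarith

lemma continuousAt_lambdaStep {x : ℝ} (hx : 3 - 2 * x ≠ 0) : ContinuousAt lambdaStep x :=
  ContinuousAt.div (by fun_prop) (by fun_prop) hx

lemma eq_one_of_lambdaStep_eq {x : ℝ} (hx : 3 - 2 * x ≠ 0) (hfix : lambdaStep x = x) : x = 1 := by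
  have h := lambdaStep_sub_self hx
  rw [hfix, sub_self, eq_comm, div_eq_zero_iff, or_iff_left hx, sq_eq_zero_iff] at h
  linarith

lemma tendsto_one_of_lambdaStep_orbit {u : ℕ → ℝ} (hu : ∀ n, u (n + 1) = lambdaStep (u n))
    (hmono : Monotone u) (hlt : ∀ n, u n < 1) : Tendsto u atTop (𝓝 1) := by
  have hbdd : BddAbove (Set.range u) := ⟨1, by rintro _ ⟨n, rfl⟩; exact (hlt n).le⟩
  have hlim : Tendsto u atTop (𝓝 (⨆ n, u n)) := tendsto_atTop_ciSup hmono hbdd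
  set a := ⨆ n, u n
  have ha : 3 - 2 * a ≠ 0 := by
    have : a ≤ 1 := ciSup_le fun n => (hlt n).le
    linarith
  have hstep : Tendsto (fun n => lambdaStep (u n)) atTop (𝓝 (lambdaStep a)) :=
    (continuousAt_lambdaStep ha).tendsto.comp hlim
  have hshift : Tendsto (fun n => lambdaStep (u n)) atTop (𝓝 a) := by
    simpa only [← hu, Function.comp_def] using hlim.comp (tendsto_add_atTop_nat 1)
  rwa [← eq_one_of_lambdaStep_eq ha (tendsto_nhds_unique hstep hshift)]

theorem lambda_seq_properties
    (l : ℕ → ℝ) (hl0 : l 0 = 0)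
    (hl : ∀ m : ℕ, l (m + 1) = (1 + l m - (l m) ^ 2) / (3 - 2 * l m)) :
    (∀ m : ℕ, 0 ≤ l m ∧ l m < 1) ∧ StrictMono l ∧
      Filter.Tendsto l Filter.atTop (nhds 1) := by
  have hstep : ∀ m, l (m + 1) = lambdaStep (l m) := hl
  have hlt : ∀ m, l m < 1 := by
    intro m
    induction m with
    | zero => simp [hl0]
    | succ m ih => exact hstep m ▸ lambdaStep_lt_one ih
  have hmono : StrictMono l :=
    strictMono_nat_of_lt_succ fun m => hstep m ▸ lt_lambdaStep (hlt m)
  have hnonneg : ∀ m, 0 ≤ l m := fun m => hl0 ▸ hmono.monotone (Nat.zero_le m)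
  exact ⟨fun m => ⟨hnonneg m, hlt m⟩, hmono,
    tendsto_one_of_lambdaStep_orbit hstep hmono.monotone hlt⟩
end

section
/- Let M > 0, let Q_n^S be defined by Q_0^S = 0, Q_n^S = (M^2 + M·Q_{n−1}^S − (Q_{n−1}^S)^2)/(3M − 2Q_{n−1}^S), and let Q_n^C = Mn/(n + 2). Then Q_n^S ≥ Q_n^C for all n ≥ 1, with equality at n = 1 and strict inequality Q_n^S > Q_n^C for all n ≥ 2. -/
/-!
Write `Q_n^S = M (1 - ρ_n)`. The Stackelberg recursion becomes `ρ_{n+1} = g(ρ_n)` with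
`g(ρ) = ρ (1 + ρ) / (1 + 2ρ)` and `ρ_0 = 1`, while `Q_n^C = M (1 - 2/(n+2))`. Since `g` is
increasing on `[0, ∞)` and `g(2/(n+2)) = 2(n+4)/((n+2)(n+6)) ≤ 2/(n+3)`, with equality only at
`n = 0`, induction gives `ρ_n ≤ 2/(n+2)`, strictly for `n ≥ 2`.
-/

noncomputable def residualStep (ρ : ℝ) : ℝ := ρ * (1 + ρ) / (1 + 2 * ρ)

lemma residualStep_nonneg {ρ : ℝ} (hρ : 0 ≤ ρ) : 0 ≤ residualStep ρ := by
  unfold residualStep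
  positivity

lemma residualStep_monotoneOn : MonotoneOn residualStep (Set.Ici 0) := by
  intro a (ha : 0 ≤ a) b (hb : 0 ≤ b) hab
  unfold residualStep
  rw [div_le_div_iff₀ (by positivity) (by positivity)]
  have key : b * (1 + b) * (1 + 2 * a) - a * (1 + a) * (1 + 2 * b)
      = (b - a) * (1 + a + b + 2 * a * b) := by ring
  rw [← sub_nonneg, key]
  exact mul_nonneg (sub_nonneg.mpr hab) (by positivity)

lemma residualStep_two_div (x : ℝ) (hx : 0 ≤ x) :
    residualStep (2 / (x + 2)) = 2 / (x + 3) - 2 * x / ((x + 2) * (x + 3) * (x + 6)) := by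
  unfold residualStep
  field_simp
  ring

lemma residualStep_two_div_le (x : ℝ) (hx : 0 ≤ x) :
    residualStep (2 / (x + 2)) ≤ 2 / (x + 3) := by
  rw [residualStep_two_div x hx]
  have : 0 ≤ 2 * x / ((x + 2) * (x + 3) * (x + 6)) := by positivity
  linarith

lemma residualStep_two_div_lt (x : ℝ) (hx : 0 < x) :
    residualStep (2 / (x + 2)) < 2 / (x + 3) := by
  rw [residualStep_two_div x hx.le]
  have : 0 < 2 * x / ((x + 2) * (x + 3) * (x + 6)) := by positivity
  linarith

lemma residualStep_iterate_nonneg (n : ℕ) : 0 ≤ residualStep^[n] 1 := by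
  induction n with
  | zero => norm_num
  | succ n ih => rw [Function.iterate_succ_apply']; exact residualStep_nonneg ih

lemma residualStep_iterate_succ_le_of_le {n : ℕ} {x : ℝ} (hx : 0 ≤ x)
    (h : residualStep^[n] 1 ≤ 2 / (x + 2)) :
    residualStep^[n + 1] 1 ≤ residualStep (2 / (x + 2)) := by
  rw [Function.iterate_succ_apply']
  exact residualStep_monotoneOn (residualStep_iterate_nonneg n)
    (Set.mem_Ici.mpr (by positivity)) h

lemma residualStep_iterate_le (n : ℕ) : residualStep^[n] 1 ≤ 2 / (n + 2) := by
  induction n with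
  | zero => norm_num
  | succ n ih =>
    calc residualStep^[n + 1] 1 ≤ residualStep (2 / (n + 2)) :=
          residualStep_iterate_succ_le_of_le n.cast_nonneg ih
      _ ≤ 2 / (n + 3) := residualStep_two_div_le n n.cast_nonneg
      _ = 2 / ((n + 1 : ℕ) + 2) := by push_cast; ring

lemma residualStep_iterate_lt {n : ℕ} (hn : 2 ≤ n) : residualStep^[n] 1 < 2 / (n + 2) := by
  obtain ⟨m, rfl⟩ : ∃ m, n = m + 1 := ⟨n - 1, by omega⟩
  have hm : (0 : ℝ) < m := by exact_mod_cast (by omega : 0 < m)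
  calc residualStep^[m + 1] 1 ≤ residualStep (2 / (m + 2)) :=
        residualStep_iterate_succ_le_of_le hm.le (residualStep_iterate_le m)
    _ < 2 / (m + 3) := residualStep_two_div_lt m hm
    _ = 2 / ((m + 1 : ℕ) + 2) := by push_cast; ring

lemma stackelberg_step_eq (M ρ : ℝ) (hM : M ≠ 0) (hρ : 0 ≤ ρ) :
    (M ^ 2 + M * (M * (1 - ρ)) - (M * (1 - ρ)) ^ 2) / (3 * M - 2 * (M * (1 - ρ)))
      = M * (1 - residualStep ρ) := by
  have hden : 3 * M - 2 * (M * (1 - ρ)) = M * (1 + 2 * ρ) := by ring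
  have : 1 + 2 * ρ ≠ 0 := by positivity
  rw [hden, residualStep]
  field_simp
  ring

lemma stackelberg_eq_residual {M : ℝ} (hM : M ≠ 0) {QS : ℕ → ℝ} (hQS0 : QS 0 = 0)
    (hQS : ∀ n : ℕ, QS (n + 1) = (M ^ 2 + M * QS n - (QS n) ^ 2) / (3 * M - 2 * QS n))
    (n : ℕ) : QS n = M * (1 - residualStep^[n] 1) := by
  induction n with
  | zero => simp [hQS0]
  | succ n ih =>
    rw [hQS, ih, stackelberg_step_eq M _ hM (residualStep_iterate_nonneg n),
      Function.iterate_succ_apply']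

lemma cournot_eq_residual (M x : ℝ) (hx : 0 ≤ x) : M * x / (x + 2) = M * (1 - 2 / (x + 2)) := by
  field_simp
  ring

theorem stackelberg_ge_cournot
    (M : ℝ) (hM : 0 < M) (QS : ℕ → ℝ)
    (hQS0 : QS 0 = 0)
    (hQS : ∀ n : ℕ, QS (n + 1) = (M ^ 2 + M * QS n - (QS n) ^ 2) / (3 * M - 2 * QS n))
    (QC : ℕ → ℝ) (hQC : ∀ n : ℕ, QC n = M * n / (n + 2)) :
    (∀ n : ℕ, 1 ≤ n → QC n ≤ QS n) ∧ QS 1 = QC 1 ∧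
      ∀ n : ℕ, 2 ≤ n → QC n < QS n := by
  have hS := stackelberg_eq_residual hM.ne' hQS0 hQS
  have hC n : QC n = M * (1 - 2 / (n + 2)) := (hQC n).trans (cournot_eq_residual M n n.cast_nonneg)
  refine ⟨fun n _ => ?_, ?_, fun n hn => ?_⟩
  · rw [hS, hC]
    gcongr
    exact residualStep_iterate_le n
  · rw [hS, hC]
    norm_num [residualStep]
  · rw [hS, hC]
    gcongr
    exact residualStep_iterate_lt hn
end

section
/- Let (X, ρ) be a complete metric space and T : X → X satisfy ρ(Tx, Ty) ≤ k₁ρ(x,y) + k₂(ρ(x,Tx) + ρ(y,Ty)) + k₃(ρ(x,Ty) + ρ(y,Tx)) for all x, y ∈ X, where k₁, k₂, k₃ ≥ 0 and k₁ + 2k₂ + 2k₃ < 1. Then T has a unique fixed point ξ, and for every x₀ ∈ X the Picard iteration xₙ = T xₙ₋₁ converges to ξ with ρ(ξ, xₙ) ≤ (kⁿ/(1−k))·ρ(x₀, x₁), where k = (k₁ + k₂ + k₃)/(1 − k₂ − k₃). -/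
/-!
Taking `y = T x` in the Hardy–Rogers inequality and splitting `ρ(x, T²x)` by the triangle
inequality gives `(1 - k₂ - k₃) ρ(Tx, T²x) ≤ (k₁ + k₂ + k₃) ρ(x, Tx)`, so consecutive Picard
steps shrink geometrically with ratio `k` and every orbit is Cauchy, with the usual a priori
estimate. Letting `y` run along an orbit with `x = ξ` its limit, the inequality becomes
`ρ(Tξ, ξ) ≤ (k₂ + k₃) ρ(ξ, Tξ)` in the limit, so `ξ` is fixed; for two fixed points it reads
`ρ(ξ, η) ≤ (k₁ + 2k₃) ρ(ξ, η)`, so they coincide.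
-/

open Filter Topology Function

section OrbitContraction

variable {X : Type*} [PseudoMetricSpace X] {T : X → X} {k : ℝ}

theorem dist_iterate_succ_le_geometric_of_dist_apply_le (hk : 0 ≤ k)
    (hT : ∀ x, dist (T x) (T (T x)) ≤ k * dist x (T x)) (x : X) (n : ℕ) :
    dist (T^[n] x) (T^[n + 1] x) ≤ dist x (T x) * k ^ n := by
  induction n with
  | zero => simp
  | succ n ih =>
    rw [iterate_succ_apply' T (n + 1), iterate_succ_apply' T n]
    calc dist (T (T^[n] x)) (T (T (T^[n] x)))
        ≤ k * dist (T^[n] x) (T (T^[n] x)) := hT _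
      _ ≤ k * (dist x (T x) * k ^ n) := by
        rw [← iterate_succ_apply' T n]
        gcongr
      _ = dist x (T x) * k ^ (n + 1) := by ring

theorem exists_tendsto_iterate_of_dist_apply_le [CompleteSpace X] (hk₀ : 0 ≤ k) (hk₁ : k < 1)
    (hT : ∀ x, dist (T x) (T (T x)) ≤ k * dist x (T x)) (x : X) :
    ∃ ξ, Tendsto (fun n ↦ T^[n] x) atTop (𝓝 ξ) ∧
      ∀ n, dist (T^[n] x) ξ ≤ dist x (T x) * k ^ n / (1 - k) := by
  have hgeom := dist_iterate_succ_le_geometric_of_dist_apply_le hk₀ hT x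
  obtain ⟨ξ, hξ⟩ := cauchySeq_tendsto_of_complete (cauchySeq_of_le_geometric k _ hk₁ hgeom)
  exact ⟨ξ, hξ, dist_le_of_le_geometric_of_tendsto k _ hk₁ hgeom hξ⟩

end OrbitContraction

def IsHardyRogers {X : Type*} [PseudoMetricSpace X] (T : X → X) (k₁ k₂ k₃ : ℝ) : Prop :=
  ∀ x y, dist (T x) (T y) ≤
    k₁ * dist x y + k₂ * (dist x (T x) + dist y (T y)) + k₃ * (dist x (T y) + dist y (T x))

namespace IsHardyRogers

variable {X : Type*} [MetricSpace X] {T : X → X} {k₁ k₂ k₃ : ℝ}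

theorem dist_apply_apply_le (h : IsHardyRogers T k₁ k₂ k₃) (hk₃ : 0 ≤ k₃) (hk : k₂ + k₃ < 1)
    (x : X) : dist (T x) (T (T x)) ≤ (k₁ + k₂ + k₃) / (1 - k₂ - k₃) * dist x (T x) := by
  have hxy := h x (T x)
  rw [dist_self] at hxy
  have htri := mul_le_mul_of_nonneg_left (dist_triangle x (T x) (T (T x))) hk₃
  rw [div_mul_eq_mul_div, le_div_iff₀ (by linarith)]
  linarith

theorem isFixedPt_of_tendsto (h : IsHardyRogers T k₁ k₂ k₃) (hk : k₂ + k₃ < 1) {x ξ : X}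
    (hx : Tendsto (fun n ↦ T^[n] x) atTop (𝓝 ξ)) : IsFixedPt T ξ := by
  have hpair : Tendsto (fun n ↦ (T^[n] x, T (T^[n] x))) atTop (𝓝 (ξ, ξ)) := by
    refine hx.prodMk_nhds ?_
    simpa only [iterate_succ_apply'] using (tendsto_add_atTop_iff_nat 1).2 hx
  have hlim := le_of_tendsto_of_tendsto'
    (((by fun_prop : Continuous fun p : X × X ↦ dist (T ξ) p.2).tendsto _).comp hpair)
    (((by fun_prop : Continuous fun p : X × X ↦ k₁ * dist ξ p.1 +
      k₂ * (dist ξ (T ξ) + dist p.1 p.2) + k₃ * (dist ξ p.2 + dist p.1 (T ξ))).tendsto _).comp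
        hpair)
    (fun n ↦ h ξ (T^[n] x))
  simp only [dist_self, dist_comm ξ (T ξ)] at hlim
  exact dist_le_zero.mp (by nlinarith [dist_nonneg (x := T ξ) (y := ξ)])

theorem eq_of_isFixedPt (h : IsHardyRogers T k₁ k₂ k₃) (hk : k₁ + 2 * k₃ < 1) {a b : X}
    (ha : IsFixedPt T a) (hb : IsFixedPt T b) : a = b := by
  have hab := h a b
  rw [ha, hb, dist_self, dist_self, dist_comm b a] at hab
  exact dist_le_zero.mp (by nlinarith [dist_nonneg (x := a) (y := b)])

end IsHardyRogers

/-- Hardy–Rogers fixed point theorem (symmetrized form), with a priori error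
estimate for the Picard iteration. -/
theorem hardy_rogers_fixed_point
    {X : Type*} [MetricSpace X] [CompleteSpace X] [Nonempty X]
    (T : X → X) (k₁ k₂ k₃ : ℝ) (hk₁ : 0 ≤ k₁) (hk₂ : 0 ≤ k₂) (hk₃ : 0 ≤ k₃)
    (hsum : k₁ + 2 * k₂ + 2 * k₃ < 1)
    (hT : ∀ x y : X, dist (T x) (T y) ≤
      k₁ * dist x y + k₂ * (dist x (T x) + dist y (T y)) +
        k₃ * (dist x (T y) + dist y (T x))) :
    ∃ ξ : X, T ξ = ξ ∧ (∀ η : X, T η = η → η = ξ) ∧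
      ∀ x₀ : X,
        Filter.Tendsto (fun n : ℕ => T^[n] x₀) Filter.atTop (nhds ξ) ∧
        ∀ n : ℕ, dist ξ (T^[n] x₀) ≤
          ((k₁ + k₂ + k₃) / (1 - k₂ - k₃)) ^ n / (1 - (k₁ + k₂ + k₃) / (1 - k₂ - k₃))
            * dist x₀ (T x₀) := by
  have hHR : IsHardyRogers T k₁ k₂ k₃ := hT
  set k := (k₁ + k₂ + k₃) / (1 - k₂ - k₃)
  have hden : 0 < 1 - k₂ - k₃ := by linarith
  have hk₀ : 0 ≤ k := div_nonneg (by linarith) hden.le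
  have hk_lt : k < 1 := (div_lt_one hden).2 (by linarith)
  have horbit := exists_tendsto_iterate_of_dist_apply_le hk₀ hk_lt
    (hHR.dist_apply_apply_le hk₃ (by linarith))
  have hfix {x ξ : X} (hx : Tendsto (fun n ↦ T^[n] x) atTop (𝓝 ξ)) : IsFixedPt T ξ :=
    hHR.isFixedPt_of_tendsto (by linarith) hx
  have huniq {a b : X} : IsFixedPt T a → IsFixedPt T b → a = b :=
    hHR.eq_of_isFixedPt (by linarith)
  obtain ⟨ξ, hξ, -⟩ := horbit (Classical.arbitrary X)
  refine ⟨ξ, hfix hξ, fun η hη ↦ huniq hη (hfix hξ), fun x₀ ↦ ?_⟩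
  obtain ⟨ξ', hξ', hbound⟩ := horbit x₀
  obtain rfl := huniq (hfix hξ') (hfix hξ)
  refine ⟨hξ', fun n ↦ ?_⟩
  rw [dist_comm, div_mul_eq_mul_div, mul_comm]
  exact hbound n
end

section
/- Under the hypotheses of the tripled Hardy–Rogers theorem with X₁ = X₂ = X₃ = X and d₁ = d₂ = d₃ = d, if the unique fixed point (x*, y*, z*) of S satisfies the local triple cross symmetry property S¹(y*,z*,x*) = S²(x*,y*,z*), S²(y*,z*,x*) = S³(x*,y*,z*), S³(y*,z*,x*) = S¹(x*,y*,z*), then x* = y* = z*. -/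
/-!
The cross symmetry makes the rotated triple `(y, z, x)` a second fixed point of `S`. For two
fixed points `p, q` the Hardy–Rogers inequality collapses to `M₁ p q ≤ (k₁ + 2 k₃) M₁ p q`,
so `M₁ p q = 0`; for `p = (x, y, z)`, `q = (y, z, x)` this is `d(x,y) + d(y,z) + d(z,x) = 0`.
-/

open Function

theorem isFixedPt_rotate {X : Type*} {S : X × X × X → X × X × X} {S₁ S₂ S₃ : X × X × X → X}
    (hScomp : ∀ p, S p = (S₁ p, S₂ p, S₃ p)) {x y z : X} (hfix : IsFixedPt S (x, y, z))
    (hsym₁ : S₁ (y, z, x) = S₂ (x, y, z)) (hsym₂ : S₂ (y, z, x) = S₃ (x, y, z))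
    (hsym₃ : S₃ (y, z, x) = S₁ (x, y, z)) :
    IsFixedPt S (y, z, x) := by
  have hcomp : (S₁ (x, y, z), S₂ (x, y, z), S₃ (x, y, z)) = (x, y, z) := (hScomp _).symm.trans hfix
  simp only [Prod.mk.injEq] at hcomp
  obtain ⟨h₁, h₂, h₃⟩ := hcomp
  rw [IsFixedPt, hScomp, hsym₁, hsym₂, hsym₃, h₁, h₂, h₃]

theorem eq_zero_of_isFixedPt_of_hardyRogers {α : Type*} {S : α → α} {d : α → α → ℝ}
    (hself : ∀ p, d p p = 0) (hcomm : ∀ p q, d p q = d q p) {k₁ k₂ k₃ : ℝ} (hk₂ : 0 ≤ k₂)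
    (hsum : k₁ + 2 * k₂ + 2 * k₃ < 1)
    (hS : ∀ p q, d (S p) (S q) ≤ k₁ * d p q + k₂ * (d p (S p) + d q (S q)) +
      k₃ * (d p (S q) + d q (S p)))
    {p q : α} (hp : IsFixedPt S p) (hq : IsFixedPt S q) (hpq : 0 ≤ d p q) :
    d p q = 0 := by
  have hle : d p q ≤ (k₁ + 2 * k₃) * d p q := by
    have := hS p q
    rw [hp.eq, hq.eq, hself, hself, hcomm q p] at this
    linarith
  nlinarith

theorem eq_and_eq_of_dist_add_dist_add_dist_eq_zero {X : Type*} [MetricSpace X] {x y z : X}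
    (h : dist x y + dist y z + dist z x = 0) : x = y ∧ y = z := by
  rw [add_eq_zero_iff_of_nonneg (by positivity) dist_nonneg,
    add_eq_zero_iff_of_nonneg dist_nonneg dist_nonneg] at h
  exact ⟨dist_eq_zero.mp h.1.1, dist_eq_zero.mp h.1.2⟩

theorem tripled_cross_symmetry_diagonal_general
    {X : Type*} [MetricSpace X]
    (S : X × X × X → X × X × X)
    (S₁ S₂ S₃ : X × X × X → X)
    (hScomp : ∀ p : X × X × X, S p = (S₁ p, S₂ p, S₃ p))
    (M₁ : X × X × X → X × X × X → ℝ)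
    (hM₁ : ∀ p q : X × X × X,
      M₁ p q = dist p.1 q.1 + dist p.2.1 q.2.1 + dist p.2.2 q.2.2)
    (k₁ k₂ k₃ : ℝ) (hk₂ : 0 ≤ k₂)
    (hsum : k₁ + 2 * k₂ + 2 * k₃ < 1)
    (hS : ∀ p q : X × X × X, M₁ (S p) (S q) ≤
      k₁ * M₁ p q + k₂ * (M₁ p (S p) + M₁ q (S q)) +
        k₃ * (M₁ p (S q) + M₁ q (S p)))
    (x y z : X) (hfix : S (x, y, z) = (x, y, z))
    (hsym₁ : S₁ (y, z, x) = S₂ (x, y, z))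
    (hsym₂ : S₂ (y, z, x) = S₃ (x, y, z))
    (hsym₃ : S₃ (y, z, x) = S₁ (x, y, z)) :
    x = y ∧ y = z := by
  have hrot : IsFixedPt S (y, z, x) := isFixedPt_rotate hScomp hfix hsym₁ hsym₂ hsym₃
  have hzero : M₁ (x, y, z) (y, z, x) = 0 :=
    eq_zero_of_isFixedPt_of_hardyRogers (fun p => by simp [hM₁])
      (fun p q => by simp only [hM₁, dist_comm]) hk₂ hsum hS hfix hrot
      (by rw [hM₁]; positivity)
  rw [hM₁] at hzero
  exact eq_and_eq_of_dist_add_dist_add_dist_eq_zero hzero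

/-- If the fixed point of a tripled Hardy–Rogers map on `X³` (with the sum metric)
satisfies the local triple cross symmetry property, then its three components
coincide. -/
theorem tripled_cross_symmetry_diagonal
    {X : Type*} [MetricSpace X]
    (S : X × X × X → X × X × X)
    (S₁ S₂ S₃ : X × X × X → X)
    (hScomp : ∀ p : X × X × X, S p = (S₁ p, S₂ p, S₃ p))
    (M₁ : X × X × X → X × X × X → ℝ)
    (hM₁ : ∀ p q : X × X × X,
      M₁ p q = dist p.1 q.1 + dist p.2.1 q.2.1 + dist p.2.2 q.2.2)
    (k₁ k₂ k₃ : ℝ) (hk₁ : 0 ≤ k₁) (hk₂ : 0 ≤ k₂) (hk₃ : 0 ≤ k₃)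
    (hsum : k₁ + 2 * k₂ + 2 * k₃ < 1)
    (hS : ∀ p q : X × X × X, M₁ (S p) (S q) ≤
      k₁ * M₁ p q + k₂ * (M₁ p (S p) + M₁ q (S q)) +
        k₃ * (M₁ p (S q) + M₁ q (S p)))
    (x y z : X) (hfix : S (x, y, z) = (x, y, z))
    (hsym₁ : S₁ (y, z, x) = S₂ (x, y, z))
    (hsym₂ : S₂ (y, z, x) = S₃ (x, y, z))
    (hsym₃ : S₃ (y, z, x) = S₁ (x, y, z)) :
    x = y ∧ y = z :=
  tripled_cross_symmetry_diagonal_general S S₁ S₂ S₃ hScomp M₁ hM₁ k₁ k₂ k₃ hk₂ hsum hS x y z hfix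
    hsym₁ hsym₂ hsym₃
end
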